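/- Let A be an associative algebra over a field of characteristic zero and n an even positive integer. Then the n-bracket [X_1,...,X_n] = ∑_{σ∈S_n} sgn(σ) X_{σ(1)}⋯X_{σ(n)} satisfies the generalized Jacobi identity: ∑_{σ∈S_{2n−1}} sgn(σ) [[X_{σ(1)},...,X_{σ(n)}], X_{σ(n+1)},...,X_{σ(2n−1)}] = 0. -/

import Mathlib

/-!
Expanding the outer bracket by the position `k` of its first argument, and then the inner
bracket, writes `[[Y₀, …, Yₘ], Yₘ₊₁, …, Y₂ₘ]` as a sum of words `Y_{π 0} ⋯ Y_{π (2m)}` with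
coefficients `(-1)^k sgn μ sgn ρ`, where `ρ` and `μ` permute the two blocks and `π` moves the block
of the first `m + 1` letters behind `k` of the others. That move cycles the first `k + m + 1`
positions by `m + 1` places, so its sign `((-1)^(k + m))^(m + 1)` is `1` because `m + 1` is even.
Antisymmetrizing over `σ` turns each word into `sgn π` times the full `(2m+1)`-bracket, so the
total coefficient is `m! (m+1)! ∑_{k=0}^{m} (-1)^k = 0`.
-/

/-- The fully antisymmetrized `n`-bracket in an associative algebra. -/
def mbracket {A : Type*} [Ring A] {n : ℕ} (X : Fin n → A) : A :=
  ∑ σ : Equiv.Perm (Fin n), (Equiv.Perm.sign σ : ℤ) • (List.ofFn fun i => X (σ i)).prod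

open Equiv Equiv.Perm

section Antisymmetrize

variable {ι A : Type*} [Fintype ι] [DecidableEq ι] [AddCommGroup A]

def antisymmetrize (G : (ι → A) → A) (X : ι → A) : A :=
  ∑ σ : Perm ι, (sign σ : ℤ) • G (X ∘ σ)

theorem antisymmetrize_comp_perm (G : (ι → A) → A) (τ : Perm ι) (X : ι → A) :
    antisymmetrize (fun Y => G (Y ∘ τ)) X = (sign τ : ℤ) • antisymmetrize G X := by
  rw [antisymmetrize, antisymmetrize, Finset.smul_sum]
  refine Fintype.sum_equiv (Equiv.mulRight τ) _ _ fun σ => ?_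
  rw [coe_mulRight, smul_smul, map_mul, Units.val_mul, mul_left_comm, ← Units.val_mul,
    Int.units_mul_self, Units.val_one, mul_one, Perm.coe_mul, Function.comp_assoc]

theorem antisymmetrize_sum_smul_comp {I : Type*} [Fintype I] (c : I → ℤ) (π : I → Perm ι)
    (G : (ι → A) → A) (X : ι → A) :
    antisymmetrize (fun Y => ∑ i, c i • G (Y ∘ π i)) X =
      (∑ i, c i * sign (π i)) • antisymmetrize G X := by
  simp_rw [Finset.sum_smul, mul_smul, ← antisymmetrize_comp_perm, antisymmetrize,
    Finset.smul_sum, smul_comm (sign _ : ℤ) (c _)]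
  exact Finset.sum_comm

end Antisymmetrize

theorem mbracket_eq_antisymmetrize {A : Type*} [Ring A] {n : ℕ} (X : Fin n → A) :
    mbracket X = antisymmetrize (fun Y => (List.ofFn Y).prod) X := rfl

theorem List.ofFn_insertNth {α : Type*} {m : ℕ} (k : Fin (m + 1)) (b : α) (Z : Fin m → α) :
    List.ofFn (Fin.insertNth k b Z) = (List.ofFn Z).take k ++ b :: (List.ofFn Z).drop k := by
  induction m with
  | zero => simp [Fin.fin_one_eq_zero k, Fin.insertNth_zero']
  | succ m ih =>
    cases k using Fin.cases with
    | zero => simp [Fin.insertNth_zero']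
    | succ k =>
      obtain ⟨a, Z, rfl⟩ : ∃ a Z', Z = Fin.cons a Z' := ⟨_, _, (Fin.cons_self_tail Z).symm⟩
      rw [Fin.insertNth_succ_cons, List.ofFn_cons, List.ofFn_cons, ih]
      rfl

theorem prod_ofFn_insertNth {M : Type*} [Monoid M] {m : ℕ} (k : Fin (m + 1)) (b : M)
    (Z : Fin m → M) :
    (List.ofFn (Fin.insertNth k b Z)).prod =
      ((List.ofFn Z).take k).prod * b * ((List.ofFn Z).drop k).prod := by
  rw [List.ofFn_insertNth, List.prod_append, List.prod_cons, mul_assoc]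

section OuterExpansion

variable {m : ℕ}

theorem cons_comp_decomposeFin_symm_zero {α : Type*} (b : α) (Z : Fin m → α)
    (μ : Perm (Fin m)) :
    (Fin.cons b Z : Fin (m + 1) → α) ∘ decomposeFin.symm (0, μ) = Fin.cons b (Z ∘ μ) := by
  ext i
  cases i using Fin.cases <;> simp

theorem bijective_decomposeFin_symm_mul_cycleRange :
    Function.Bijective fun kμ : Fin (m + 1) × Perm (Fin m) =>
      decomposeFin.symm (0, kμ.2) * kμ.1.cycleRange := by
  refine (Fintype.bijective_iff_injective_and_card _).2
    ⟨?_, by simp [Fintype.card_perm, Nat.factorial_succ]⟩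
  rintro ⟨k, μ⟩ ⟨k', μ'⟩
    (h : decomposeFin.symm (0, μ) * k.cycleRange = decomposeFin.symm (0, μ') * k'.cycleRange)
  have apply_self : ∀ (k : Fin (m + 1)) (μ : Perm (Fin m)),
      (decomposeFin.symm (0, μ) * k.cycleRange) k = 0 := by simp
  obtain rfl : k = k' := (decomposeFin.symm (0, μ') * k'.cycleRange).injective <| by
    rw [← h, apply_self, h, apply_self]
  simpa using decomposeFin.symm.injective (mul_right_cancel h)

theorem mbracket_cons {A : Type*} [Ring A] (b : A) (Z : Fin m → A) :
    mbracket (Fin.cons b Z : Fin (m + 1) → A) = ∑ k : Fin (m + 1), ∑ μ : Perm (Fin m),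
      ((-1) ^ (k : ℕ) * sign μ : ℤ) • (List.ofFn (Fin.insertNth k b (Z ∘ μ))).prod := by
  rw [mbracket, ← Fintype.sum_prod_type',
    ← (Equiv.ofBijective _ bijective_decomposeFin_symm_mul_cycleRange).sum_comp]
  refine Fintype.sum_congr _ _ fun ⟨k, μ⟩ => ?_
  have hword : (fun i => (Fin.cons b Z : Fin (m + 1) → A)
      ((decomposeFin.symm (0, μ) * k.cycleRange) i)) = Fin.insertNth k b (Z ∘ μ) := by
    rw [← Fin.cons_comp_cycleRange, ← cons_comp_decomposeFin_symm_zero]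
    rfl
  simp only [Equiv.ofBijective_apply, hword, map_mul, decomposeFin.symm_sign, if_true, one_mul,
    Fin.sign_cycleRange, Units.val_mul, Units.val_pow_eq_pow_val, Units.val_neg, Units.val_one,
    mul_comm]

end OuterExpansion

theorem Fin.val_cycleRange_pow_of_le {n : ℕ} {c i : Fin n} (hi : i ≤ c) (j : ℕ) :
    ((c.cycleRange ^ j) i : ℕ) = (i + j) % (c + 1) := by
  induction j with
  | zero => simp [Nat.mod_eq_of_lt (Nat.lt_succ_of_le hi)]
  | succ j ih =>
    have hle : (c.cycleRange ^ j) i ≤ c := by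
      rw [Fin.le_def, ih]
      exact Nat.lt_succ_iff.1 (Nat.mod_lt _ (Nat.succ_pos _))
    rw [pow_succ', Perm.mul_apply, Fin.coe_cycleRange_of_le hle]
    simp only [Fin.ext_iff, ih]
    rw [← add_assoc, ← Nat.mod_add_mod (i + j)]
    have hr : (i + j : ℕ) % (c + 1) < c + 1 := Nat.mod_lt _ (by omega)
    split_ifs with hrc
    · rw [hrc, Nat.mod_self]
    · exact (Nat.mod_eq_of_lt (by omega)).symm

theorem Fin.cycleRange_pow_apply_of_gt {n : ℕ} {c i : Fin n} (hi : c < i) (j : ℕ) :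
    (c.cycleRange ^ j) i = i :=
  Perm.pow_apply_eq_self_of_apply_eq_self (Fin.cycleRange_of_gt hi) j

section BlockInsertion

variable {α : Type*} {p q N : ℕ}

def leftBlock (h : p + 1 + q = N) (Y : Fin N → α) : Fin (p + 1) → α := fun j => Y ⟨j, by omega⟩

def rightBlock (h : p + 1 + q = N) (Y : Fin N → α) : Fin q → α :=
  fun j => Y ⟨p + 1 + j, by omega⟩

/-- `Y ∘ blockInsert h k` is the left block of `Y` inserted after the first `k` letters of its
right block (`ofFn_comp_blockInsert`). -/
def blockInsert (h : p + 1 + q = N) (k : Fin (q + 1)) : Perm (Fin N) :=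
  (Fin.cycleRange (⟨k + p, by omega⟩ : Fin N)) ^ (p + 1)

theorem sign_blockInsert (h : p + 1 + q = N) (k : Fin (q + 1)) :
    sign (blockInsert h k) = ((-1) ^ (k + p : ℕ)) ^ (p + 1) := by
  simp [blockInsert]

theorem val_blockInsert (h : p + 1 + q = N) (k : Fin (q + 1)) (i : Fin N) :
    (blockInsert h k i : ℕ) =
      if (i : ℕ) < k then i + (p + 1) else if (i : ℕ) < k + (p + 1) then i - k else i := by
  by_cases hi : (i : ℕ) ≤ k + p
  · rw [blockInsert, Fin.val_cycleRange_pow_of_le (Fin.le_def.2 hi)]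
    dsimp only
    split_ifs with h₁ h₂
    · exact Nat.mod_eq_of_lt (by omega)
    · rw [show (i : ℕ) + (p + 1) = k + p + 1 + (i - k) by omega, Nat.add_mod_left]
      exact Nat.mod_eq_of_lt (by omega)
    · omega
  · rw [blockInsert, Fin.cycleRange_pow_apply_of_gt (Fin.lt_def.2 (not_le.1 hi)), if_neg (by omega),
      if_neg (by omega)]

theorem ofFn_comp_blockInsert (h : p + 1 + q = N) (k : Fin (q + 1)) (Y : Fin N → α) :
    List.ofFn (Y ∘ blockInsert h k) = (List.ofFn (rightBlock h Y)).take k ++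
      List.ofFn (leftBlock h Y) ++ (List.ofFn (rightBlock h Y)).drop k := by
  refine List.ext_getElem (by simp; omega) fun i _ _ => ?_
  simp only [List.getElem_ofFn, List.getElem_append, List.getElem_take, List.getElem_drop,
    List.length_take, List.length_ofFn, List.length_append, Function.comp_apply, leftBlock,
    rightBlock, min_eq_left (Nat.lt_succ_iff.1 k.isLt)]
  split_ifs <;> congr 1 <;> ext <;> simp only [val_blockInsert] <;> split_ifs <;> omega

theorem prod_ofFn_insertNth_leftBlock {M : Type*} [Monoid M] (h : p + 1 + q = N)
    (k : Fin (q + 1)) (Y : Fin N → M) :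
    (List.ofFn (Fin.insertNth k (List.ofFn (leftBlock h Y)).prod (rightBlock h Y))).prod =
      (List.ofFn (Y ∘ blockInsert h k)).prod := by
  rw [prod_ofFn_insertNth, ofFn_comp_blockInsert, List.prod_append, List.prod_append]

def blockPerm (h : p + 1 + q = N) (ρ : Perm (Fin (p + 1))) (μ : Perm (Fin q)) : Perm (Fin N) :=
  (finSumFinEquiv.trans (finCongr h)).permCongr (Perm.sumCongr ρ μ)

theorem sign_blockPerm (h : p + 1 + q = N) (ρ : Perm (Fin (p + 1))) (μ : Perm (Fin q)) :
    sign (blockPerm h ρ μ) = sign ρ * sign μ := by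
  simp [blockPerm, sign_permCongr]

theorem leftBlock_comp_blockPerm (h : p + 1 + q = N) (ρ : Perm (Fin (p + 1)))
    (μ : Perm (Fin q)) (Y : Fin N → α) :
    leftBlock h (Y ∘ blockPerm h ρ μ) = leftBlock h Y ∘ ρ := by
  ext j
  change Y (blockPerm h ρ μ ((finSumFinEquiv.trans (finCongr h)) (Sum.inl j))) =
    Y ((finSumFinEquiv.trans (finCongr h)) (Sum.inl (ρ j)))
  rw [blockPerm, permCongr_apply, symm_apply_apply]
  rfl

theorem rightBlock_comp_blockPerm (h : p + 1 + q = N) (ρ : Perm (Fin (p + 1)))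
    (μ : Perm (Fin q)) (Y : Fin N → α) :
    rightBlock h (Y ∘ blockPerm h ρ μ) = rightBlock h Y ∘ μ := by
  ext j
  change Y (blockPerm h ρ μ ((finSumFinEquiv.trans (finCongr h)) (Sum.inr j))) =
    Y ((finSumFinEquiv.trans (finCongr h)) (Sum.inr (μ j)))
  rw [blockPerm, permCongr_apply, symm_apply_apply]
  rfl

theorem mbracket_cons_mbracket {A : Type*} [Ring A] (h : p + 1 + q = N) (Y : Fin N → A) :
    mbracket (Fin.cons (mbracket (leftBlock h Y)) (rightBlock h Y)) =
      ∑ i : Fin (q + 1) × Perm (Fin q) × Perm (Fin (p + 1)),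
        ((-1) ^ (i.1 : ℕ) * sign i.2.1 * sign i.2.2 : ℤ) •
          (List.ofFn (Y ∘ (blockPerm h i.2.2 i.2.1 * blockInsert h i.1))).prod := by
  simp only [mbracket_cons, Fintype.sum_prod_type]
  refine Finset.sum_congr rfl fun k _ => Finset.sum_congr rfl fun μ _ => ?_
  rw [prod_ofFn_insertNth, mbracket_eq_antisymmetrize, antisymmetrize, Finset.mul_sum,
    Finset.sum_mul, Finset.smul_sum]
  refine Finset.sum_congr rfl fun ρ _ => ?_
  rw [mul_smul_comm, smul_mul_assoc, smul_smul, ← prod_ofFn_insertNth,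
    ← leftBlock_comp_blockPerm h ρ μ, ← rightBlock_comp_blockPerm h ρ μ,
    prod_ofFn_insertNth_leftBlock, Perm.coe_mul, Function.comp_assoc]

end BlockInsertion

/-- with n = m+1 even: the antisymmetrized bracket satisfies the
generalized Jacobi identity. -/
theorem mbracket_generalized_jacobi_of_even {A : Type*} [Ring A]
    (m : ℕ) (hn : Even (m + 1)) (X : Fin (2 * m + 1) → A) :
    ∑ σ : Equiv.Perm (Fin (2 * m + 1)), (Equiv.Perm.sign σ : ℤ) •
        mbracket (Fin.cons
          (mbracket fun j : Fin (m + 1) => X (σ (Fin.castLE (by omega) j)))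
          (fun j : Fin m => X (σ ⟨m + 1 + j.1, by have := j.isLt; omega⟩))) = 0 := by
  have h : m + 1 + m = 2 * m + 1 := by omega
  let c : Fin (m + 1) × Perm (Fin m) × Perm (Fin (m + 1)) → ℤ := fun i =>
    (-1) ^ (i.1 : ℕ) * sign i.2.1 * sign i.2.2
  let π : Fin (m + 1) × Perm (Fin m) × Perm (Fin (m + 1)) → Perm (Fin (2 * m + 1)) := fun i =>
    blockPerm h i.2.2 i.2.1 * blockInsert h i.1
  have hcoeff : ∀ i, c i * sign (π i) = (-1) ^ (i.1 : ℕ) := by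
    rintro ⟨k, μ, ρ⟩
    simp only [c, π, map_mul, sign_blockPerm, sign_blockInsert, ← pow_mul,
      Even.neg_one_pow (hn.mul_left _), mul_one]
    rcases Int.units_eq_one_or (sign μ) with hμ | hμ <;>
      rcases Int.units_eq_one_or (sign ρ) with hρ | hρ <;> simp [hμ, hρ]
  calc _ = antisymmetrize
        (fun Y => mbracket (Fin.cons (mbracket (leftBlock h Y)) (rightBlock h Y))) X := rfl
    _ = antisymmetrize (fun Y => ∑ i, c i • (List.ofFn (Y ∘ π i)).prod) X := by
      simp_rw [mbracket_cons_mbracket h]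
      rfl
    _ = (∑ i, c i * sign (π i)) • mbracket X := by
      rw [antisymmetrize_sum_smul_comp c π (fun Y => (List.ofFn Y).prod),
        mbracket_eq_antisymmetrize]
    _ = 0 := by
      rw [Finset.sum_congr rfl fun i _ => hcoeff i, Fintype.sum_prod_type]
      simp only [Finset.sum_const, Finset.card_univ]
      rw [← Finset.smul_sum, Fin.sum_univ_eq_sum_range (fun i => (-1 : ℤ) ^ i), neg_one_geom_sum,
        if_pos hn, smul_zero, zero_smul]
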